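/- arXiv:1110.3743 — 3 statements merged into one kernel-verified Lean document; each statement's English description precedes it below -/
import Mathlib

section
/- Let G be a residually nilpotent group and let ψ be a nontrivial automorphism of G that induces the identity on the abelianization G^ab. Then there exists a nilpotent quotient N of G and an element g ∈ N such that the automorphism induced by ψ on N sends g to g·z for some nontrivial central element z of N. -/
/-!
Pick `g` with `ψ g ≠ g` and put `w = ψ g * g⁻¹`, so that `ψ g = w * g`. A nilpotent quotient
`π₀ : G → M` detecting `w` need not be `ψ`-equivariant, but `x ↦ (π₀ (ψⁿ x))ₙ` embeds the
quotient by the largest `ψ`-invariant subgroup of `ker π₀` into `ℕ → M`, which is still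
nilpotent because all factors have the same class. In that nilpotent quotient `Q`, the image of
`w` lies in some `γₖ Q` but not in `γₖ₊₁ Q`; it therefore becomes central and nontrivial in the
characteristic quotient `Q ⧸ γₖ₊₁ Q`, to which `ψ` descends.
-/

open scoped commutatorElement

universe u

namespace MonoidHom

def orbitPi {G M : Type*} [Group G] [Group M] (f : G →* M) (φ : Monoid.End G) :
    G →* (ℕ → M) :=
  MonoidHom.pi fun n => f.comp (φ ^ n)

def shiftPi (M : Type*) [Group M] : (ℕ → M) →* (ℕ → M) :=
  MonoidHom.pi fun n => Pi.evalMonoidHom (fun _ => M) (n + 1)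

theorem shiftPi_comp_orbitPi {G M : Type*} [Group G] [Group M] (f : G →* M)
    (φ : Monoid.End G) :
    (shiftPi M).comp (f.orbitPi φ) = (f.orbitPi φ).comp φ := by
  ext x n
  show f ((φ ^ (n + 1)) x) = f ((φ ^ n) (φ x))
  rw [pow_succ]
  rfl

theorem orbitPi_apply_zero {G M : Type*} [Group G] [Group M] (f : G →* M) (φ : Monoid.End G)
    (x : G) :
    f.orbitPi φ x 0 = f x :=
  rfl

theorem exists_comp_rangeRestrict_eq {G P : Type*} [Group G] [Group P] (f : G →* P)
    (φ : G →* G) (σ : P →* P) (h : σ.comp f = f.comp φ) :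
    ∃ φ' : f.range →* f.range, φ'.comp f.rangeRestrict = f.rangeRestrict.comp φ := by
  have hσ : ∀ y : f.range, σ y ∈ f.range := by
    rintro ⟨_, x, rfl⟩
    exact ⟨φ x, (DFunLike.congr_fun h x).symm⟩
  refine ⟨(σ.comp f.range.subtype).codRestrict f.range hσ, ?_⟩
  ext x
  exact DFunLike.congr_fun h x

end MonoidHom

theorem Group.isNilpotent_pi_const (M : Type*) [Group M] [Group.IsNilpotent M] (ι : Type*) :
    Group.IsNilpotent (ι → M) :=
  Group.isNilpotent_pi_of_bounded_class (Group.nilpotencyClass M) fun _ => le_rfl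

theorem exists_comp_mk_lowerCentralSeries_eq {Q : Type*} [Group Q] (φ : Q →* Q) (n : ℕ) :
    ∃ φ' : Q ⧸ (⊤ : Subgroup Q).lowerCentralSeries n →* Q ⧸ (⊤ : Subgroup Q).lowerCentralSeries n,
      φ'.comp (QuotientGroup.mk' _) = (QuotientGroup.mk' _).comp φ := by
  have hφ : ((⊤ : Subgroup Q).lowerCentralSeries n).map φ ≤
      (⊤ : Subgroup Q).lowerCentralSeries n := by
    rw [Subgroup.map_lowerCentralSeries]
    exact Subgroup.lowerCentralSeries_mono n le_top
  exact ⟨QuotientGroup.map _ _ φ (Subgroup.map_le_iff_le_comap.mp hφ), by ext; rfl⟩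

theorem exists_mem_lowerCentralSeries_notMem_succ {Q : Type*} [Group Q] [Group.IsNilpotent Q]
    {x : Q} (hx : x ≠ 1) :
    ∃ n, x ∈ (⊤ : Subgroup Q).lowerCentralSeries n ∧
      x ∉ (⊤ : Subgroup Q).lowerCentralSeries (n + 1) := by
  by_contra! h
  obtain ⟨c, hc⟩ := Subgroup.nilpotent_iff_lowerCentralSeries.mp ‹Group.IsNilpotent Q›
  have hmem : ∀ n, x ∈ (⊤ : Subgroup Q).lowerCentralSeries n :=
    fun n => Nat.rec (Subgroup.mem_top x) (fun n hn => h n hn) n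
  exact hx (by simpa [hc] using hmem c)

theorem mk_mem_center_of_mem_lowerCentralSeries {Q : Type*} [Group Q] {x : Q} {n : ℕ}
    (hx : x ∈ (⊤ : Subgroup Q).lowerCentralSeries n) :
    (x : Q ⧸ (⊤ : Subgroup Q).lowerCentralSeries (n + 1)) ∈ Subgroup.center _ := by
  rw [Subgroup.mem_center_iff]
  intro y
  induction y using QuotientGroup.induction_on with | H b => ?_
  have hcomm : ⁅x, b⁆ ∈ (⊤ : Subgroup Q).lowerCentralSeries (n + 1) :=
    Subgroup.commutator_mem_commutator hx (Subgroup.mem_top b)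
  have hmk : QuotientGroup.mk' _ ⁅x, b⁆ = 1 := (QuotientGroup.eq_one_iff _).mpr hcomm
  rw [map_commutatorElement, commutatorElement_eq_one_iff_mul_comm] at hmk
  exact hmk.symm

theorem exists_equivariant_nilpotent_quotient_center {G : Type*} [Group G] {M : Type u}
    [Group M] [Group.IsNilpotent M] (π₀ : G →* M) (φ : G →* G) {w : G} (hw : π₀ w ≠ 1) :
    ∃ (N : Type u) (_ : Group N) (π : G →* N) (φ' : N →* N),
      Function.Surjective π ∧ Group.IsNilpotent N ∧ φ'.comp π = π.comp φ ∧
      π w ∈ Subgroup.center N ∧ π w ≠ 1 := by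
  set f := π₀.orbitPi φ
  have := Group.isNilpotent_pi_const M ℕ
  obtain ⟨φQ, hφQ⟩ := f.exists_comp_rangeRestrict_eq φ _ (MonoidHom.shiftPi_comp_orbitPi π₀ φ)
  have hw' : f.rangeRestrict w ≠ 1 := fun h => hw <| by
    rw [← π₀.orbitPi_apply_zero φ w, ← MonoidHom.coe_rangeRestrict, h]
    rfl
  obtain ⟨k, hk, hk'⟩ := exists_mem_lowerCentralSeries_notMem_succ hw'
  obtain ⟨φ', hφ'⟩ := exists_comp_mk_lowerCentralSeries_eq φQ (k + 1)
  set L := (⊤ : Subgroup f.range).lowerCentralSeries (k + 1)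
  set ρ := QuotientGroup.mk' L
  refine ⟨f.range ⧸ L, inferInstance, ρ.comp f.rangeRestrict, φ',
    (QuotientGroup.mk'_surjective _).comp f.rangeRestrict_surjective, inferInstance, ?_,
    mk_mem_center_of_mem_lowerCentralSeries hk, (QuotientGroup.eq_one_iff _).not.mpr hk'⟩
  rw [← MonoidHom.comp_assoc, hφ', MonoidHom.comp_assoc, hφQ, MonoidHom.comp_assoc]

theorem stmt_0_general {G : Type*} [Group G]
    (hres : ∀ g : G, g ≠ 1 → ∃ (N : Type) (_ : Group N) (π : G →* N),
      Function.Surjective π ∧ Group.IsNilpotent N ∧ π g ≠ 1)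
    (ψ : MulAut G) (hψ : ψ ≠ 1) :
    ∃ (N : Type) (_ : Group N) (π : G →* N) (ψ' : N →* N),
      Function.Surjective π ∧ Group.IsNilpotent N ∧
      ψ'.comp π = π.comp ψ.toMonoidHom ∧
      ∃ (g : G) (z : N), z ∈ Subgroup.center N ∧ z ≠ 1 ∧ ψ' (π g) = π g * z := by
  obtain ⟨g, hg⟩ : ∃ g : G, ψ g ≠ g := by
    by_contra! h
    exact hψ (MulEquiv.ext h)
  have hw : ψ g * g⁻¹ ≠ 1 := mt mul_inv_eq_one.mp hg
  obtain ⟨M, _, π₀, -, hM, hπ₀⟩ := hres _ hw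
  obtain ⟨N, _, π, ψ', hπ, hN, hcomm, hcenter, hne⟩ :=
    exists_equivariant_nilpotent_quotient_center π₀ ψ.toMonoidHom hπ₀
  refine ⟨N, _, π, ψ', hπ, hN, hcomm, g, _, hcenter, hne, ?_⟩
  calc ψ' (π g) = π (ψ g * g⁻¹ * g) := by simpa using DFunLike.congr_fun hcomm g
    _ = π (ψ g * g⁻¹) * π g := map_mul π _ _
    _ = π g * π (ψ g * g⁻¹) := (Subgroup.mem_center_iff.mp hcenter _).symm

/-- Residually nilpotent: every nontrivial element survives in some nilpotent quotient. -/
theorem stmt_0 {G : Type*} [Group G]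
    (hres : ∀ g : G, g ≠ 1 → ∃ (N : Type) (_ : Group N) (π : G →* N),
      Function.Surjective π ∧ Group.IsNilpotent N ∧ π g ≠ 1)
    (ψ : MulAut G) (hψ : ψ ≠ 1)
    (hab : ∀ g : G, ψ g * g⁻¹ ∈ commutator G) :
    ∃ (N : Type) (_ : Group N) (π : G →* N) (ψ' : N →* N),
      Function.Surjective π ∧ Group.IsNilpotent N ∧
      ψ'.comp π = π.comp ψ.toMonoidHom ∧
      ∃ (g : G) (z : N), z ∈ Subgroup.center N ∧ z ≠ 1 ∧ ψ' (π g) = π g * z :=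
  stmt_0_general hres ψ hψ
end

section
/- Let G be a residually torsion-free nilpotent group and let ψ be a nontrivial automorphism of G that induces the identity on G^ab. Then ψ has infinite order in Aut(G). -/
/-- Torsion-freeness as the absence of nontrivial elements of finite order. For non-commutative
groups this is weaker than Mathlib's `IsMulTorsionFree`, which asks for unique roots. -/
def Monoid.IsTorsionFree (G : Type*) [Monoid G] : Prop :=
  ∀ g : G, g ≠ 1 → ¬IsOfFinOrder g

/-!
Replacing the kernel of a torsion-free nilpotent quotient `π` of `G` by the kernel of
`g ↦ (π (ψ^[i] g))ᵢ` gives a `ψ`-invariant torsion-free nilpotent quotient, so it suffices to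
show that a periodic endomorphism `ψ` of a torsion-free nilpotent group acting trivially on the
abelianization is the identity. This goes by induction on the nilpotency class: `G ⧸ center G`
is again torsion-free, so by induction `ψ g = c * g` with `c` central. Such a `ψ` fixes all
commutators, in particular `c ∈ commutator G`, hence `ψ^[n] g = c ^ n * g`, and `c ^ n = 1`
forces `c = 1`.
-/

open Subgroup
open scoped commutatorElement

namespace Monoid.IsTorsionFree

variable {G H : Type*} [Group G] [Group H]

theorem eq_one (hG : IsTorsionFree G) {g : G} (hg : IsOfFinOrder g) : g = 1 :=
  by_contra fun h => hG g h hg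

theorem of_injective {f : H →* G} (hf : Function.Injective f) (hG : IsTorsionFree G) :
    IsTorsionFree H := fun h h1 hfin =>
  h1 (hf (by rw [hG.eq_one (hf.isOfFinOrder_iff.mpr hfin), map_one]))

theorem pi {ι : Type*} {Gs : ι → Type*} [∀ i, Group (Gs i)]
    (h : ∀ i, IsTorsionFree (Gs i)) : IsTorsionFree (∀ i, Gs i) := fun _ hx hfin =>
  hx (funext fun i => (h i).eq_one (hfin.apply i))

theorem quotient_ker (hH : IsTorsionFree H) (φ : G →* H) : IsTorsionFree (G ⧸ φ.ker) :=
  of_injective (QuotientGroup.kerLift_injective φ) hH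

end Monoid.IsTorsionFree

theorem Monoid.isTorsionFree_subgroup_iff {G : Type*} [Group G] {K : Subgroup G} :
    IsTorsionFree K ↔ ∀ z ∈ K, IsOfFinOrder z → z = 1 := by
  refine ⟨fun hK z hz hfin => ?_, fun h z hz hfin => hz ?_⟩
  · exact congrArg Subtype.val (hK.eq_one
      ((Function.Injective.isOfFinOrder_iff (x := (⟨z, hz⟩ : K)) K.subtype_injective).mp hfin))
  · exact Subtype.ext (h z z.2 (K.subtype_injective.isOfFinOrder_iff.mpr hfin))

section Commutator

variable {G : Type*} [Group G]

theorem commutatorElement_pow_left_of_commute {x y : G} (h : Commute x ⁅x, y⁆) (m : ℕ) :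
    ⁅x ^ m, y⁆ = ⁅x, y⁆ ^ m := by
  induction m with
  | zero => simp
  | succ m ih =>
    rw [pow_succ', commutatorElement_mul_left_eq_conj_mul, ih, (h.pow_right m).eq,
      mul_inv_cancel_right, pow_succ]

theorem commutatorElement_eq_one_of_mem_center {z : G} (hz : z ∈ center G) (g : G) :
    ⁅z, g⁆ = 1 :=
  commutatorElement_eq_one_iff_mul_comm.mpr (mem_center_iff.mp hz g).symm

theorem mem_center_of_forall_commutatorElement_eq_one {x : G} (h : ∀ y : G, ⁅x, y⁆ = 1) :
    x ∈ center G :=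
  mem_center_iff.mpr fun y => (commutatorElement_eq_one_iff_mul_comm.mp (h y)).symm

theorem commutatorElement_mul_of_mem_center {u v : G} (hu : u ∈ center G)
    (hv : v ∈ center G) (a b : G) : ⁅u * a, v * b⁆ = ⁅a, b⁆ := by
  rw [commutatorElement_mul_left_eq_conj_mul, commutatorElement_eq_one_of_mem_center hu,
    mul_one, ← mem_center_iff.mp hu, mul_inv_cancel_right,
    commutatorElement_mul_right_eq_mul_conj, ← commutatorElement_inv,
    commutatorElement_eq_one_of_mem_center hv, inv_one, one_mul, ← mem_center_iff.mp hv,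
    mul_inv_cancel_right]

end Commutator

namespace Monoid.IsTorsionFree

variable {G : Type*} [Group G]

/-- If `x` is central modulo the centre, then `y ↦ ⁅x, y⁆` takes central values, so
`⁅x, y⁆ ^ m = ⁅x ^ m, y⁆`. -/
theorem center_quotient_center (hZ : IsTorsionFree (center G)) :
    IsTorsionFree (center (G ⧸ center G)) := by
  rw [isTorsionFree_subgroup_iff] at hZ ⊢
  intro x hx hfin
  obtain ⟨x, rfl⟩ := QuotientGroup.mk_surjective x
  obtain ⟨m, hm, hxm⟩ := isOfFinOrder_iff_pow_eq_one.mp hfin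
  rw [← QuotientGroup.mk_pow, QuotientGroup.eq_one_iff] at hxm
  have hcomm : ∀ y : G, ⁅x, y⁆ ∈ center G := fun y => by
    rw [← QuotientGroup.eq_one_iff]
    exact (map_commutatorElement (QuotientGroup.mk' _) x y).trans
      (commutatorElement_eq_one_of_mem_center hx _)
  refine (QuotientGroup.eq_one_iff x).mpr
    (mem_center_of_forall_commutatorElement_eq_one fun y => ?_)
  refine hZ _ (hcomm y) (isOfFinOrder_iff_pow_eq_one.mpr ⟨m, hm, ?_⟩)
  rw [← commutatorElement_pow_left_of_commute (mem_center_iff.mp (hcomm y) x),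
    commutatorElement_eq_one_of_mem_center hxm]

theorem of_center [Group.IsNilpotent G] (hZ : IsTorsionFree (center G)) :
    IsTorsionFree G := by
  refine Group.nilpotent_center_quotient_ind
    (P := fun G _ _ => IsTorsionFree (center G) → IsTorsionFree G) G ?_ ?_ hZ
  · exact fun G _ _ _ g hg => absurd (Subsingleton.elim g 1) hg
  · intro G _ _ ih hZ g hg hfin
    have hgZ : (g : G ⧸ center G) = 1 :=
      (ih (center_quotient_center hZ)).eq_one ((QuotientGroup.mk' _).isOfFinOrder hfin)
    exact hg (isTorsionFree_subgroup_iff.mp hZ g ((QuotientGroup.eq_one_iff g).mp hgZ) hfin)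

theorem quotient_center [Group.IsNilpotent G] (hG : IsTorsionFree G) :
    IsTorsionFree (G ⧸ center G) :=
  of_center (center_quotient_center (hG.of_injective (center G).subtype_injective))

end Monoid.IsTorsionFree

namespace QuotientGroup

variable {G : Type*} [Group G] {K : Subgroup G} [K.Normal] {f : G →* G} (hK : K ≤ K.comap f)

theorem iterate_map_mk (n : ℕ) (g : G) :
    (map K K f hK)^[n] (g : G ⧸ K) = ((f^[n] g : G) : G ⧸ K) :=
  ((Function.Semiconj.iterate_right (f := ((↑) : G → G ⧸ K))
    (fun g => (map_mk K K f hK g).symm) n) g).symm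

theorem iterate_map_eq_id {n : ℕ} (hfn : (⇑f)^[n] = id) : (⇑(map K K f hK))^[n] = id := by
  funext x
  induction x using QuotientGroup.induction_on with
  | H g => rw [iterate_map_mk, hfn, id, id]

theorem map_mul_inv_mem_commutator (hab : ∀ g, f g * g⁻¹ ∈ commutator G) (x : G ⧸ K) :
    map K K f hK x * x⁻¹ ∈ commutator (G ⧸ K) := by
  induction x using QuotientGroup.induction_on with
  | H g =>
    rw [map_mk, ← mk_inv, ← mk_mul]
    have h := mem_map_of_mem (mk' K) (hab g)
    rw [map_commutator_eq] at h
    exact commutator_mono le_top le_top h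

end QuotientGroup

theorem MonoidHom.iterate_apply_eq_pow_mul {M : Type*} [Monoid M] (f : M →* M) {c g : M}
    (hc : f c = c) (hg : f g = c * g) (n : ℕ) : f^[n] g = c ^ n * g := by
  induction n with
  | zero => simp
  | succ n ih =>
    rw [Function.iterate_succ_apply', ih, map_mul, map_pow, hc, hg, ← mul_assoc, ← pow_succ]

theorem Subgroup.center_le_comap_of_surjective {G H : Type*} [Group G] [Group H] {f : G →* H}
    (hf : Function.Surjective f) : center G ≤ (center H).comap f := fun z hz =>
  mem_center_iff.mpr fun h => by
    obtain ⟨g, rfl⟩ := hf h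
    rw [← map_mul, mem_center_iff.mp hz, map_mul]

theorem MonoidHom.commutator_le_eqLocus_of_mul_inv_mem_center {G : Type*} [Group G]
    (f : G →* G) (hf : ∀ g, f g * g⁻¹ ∈ center G) :
    commutator G ≤ f.eqLocus (MonoidHom.id G) := by
  rw [commutator_def, commutator_le]
  intro a _ b _
  calc f ⁅a, b⁆ = ⁅f a * a⁻¹ * a, f b * b⁻¹ * b⁆ := by
        rw [map_commutatorElement, inv_mul_cancel_right, inv_mul_cancel_right]
    _ = ⁅a, b⁆ := commutatorElement_mul_of_mem_center (hf a) (hf b) a b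

namespace Monoid.IsTorsionFree

variable {G M : Type*} [Group G] [Group M]

theorem apply_eq_self_of_iterate_eq_id [Group.IsNilpotent G] (hG : IsTorsionFree G)
    (f : G →* G) {n : ℕ} (hn : n ≠ 0) (hfn : (⇑f)^[n] = id)
    (hab : ∀ g, f g * g⁻¹ ∈ commutator G) (g : G) : f g = g := by
  refine Group.nilpotent_center_quotient_ind
    (P := fun G _ _ => IsTorsionFree G → ∀ f : G →* G, (⇑f)^[n] = id →
      (∀ g, f g * g⁻¹ ∈ commutator G) → ∀ g, f g = g) G ?_ ?_ hG f hfn hab g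
  · exact fun G _ _ _ _ _ _ g => Subsingleton.elim _ _
  · intro G _ _ ih hG f hfn hab g
    obtain ⟨k, rfl⟩ := Nat.exists_eq_succ_of_ne_zero hn
    have hf : Function.Surjective f := Function.Surjective.of_comp (g := f^[k]) <| by
      rw [← Function.iterate_succ', hfn]
      exact Function.surjective_id
    have hZ := center_le_comap_of_surjective hf
    have hcen : ∀ g, f g * g⁻¹ ∈ center G := fun g => by
      have h := ih hG.quotient_center _ (QuotientGroup.iterate_map_eq_id hZ hfn)
        (QuotientGroup.map_mul_inv_mem_commutator hZ hab) (g : G ⧸ center G)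
      rwa [QuotientGroup.map_mk, QuotientGroup.eq_iff_div_mem, div_eq_mul_inv] at h
    have hc : f (f g * g⁻¹) = f g * g⁻¹ :=
      f.commutator_le_eqLocus_of_mul_inv_mem_center hcen (hab g)
    have hpow := f.iterate_apply_eq_pow_mul hc (inv_mul_cancel_right (f g) g).symm (k + 1)
    rw [hfn, id, right_eq_mul] at hpow
    exact mul_inv_eq_one.mp (hG.eq_one (isOfFinOrder_iff_pow_eq_one.mpr ⟨_, k.succ_pos, hpow⟩))

theorem apply_eq_of_ker_le_comap [Group.IsNilpotent M] (hM : IsTorsionFree M) (φ : G →* M)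
    (f : G →* G) (hker : φ.ker ≤ φ.ker.comap f) {n : ℕ} (hn : n ≠ 0)
    (hfn : (⇑f)^[n] = id) (hab : ∀ g, f g * g⁻¹ ∈ commutator G) (g : G) :
    φ (f g) = φ g := by
  have : Group.IsNilpotent (G ⧸ φ.ker) :=
    Group.nilpotent_of_mulEquiv (QuotientGroup.quotientKerEquivRange φ).symm
  have h := (hM.quotient_ker φ).apply_eq_self_of_iterate_eq_id _ hn
    (QuotientGroup.iterate_map_eq_id hker hfn)
    (QuotientGroup.map_mul_inv_mem_commutator hker hab) (g : G ⧸ φ.ker)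
  rw [QuotientGroup.map_mk] at h
  simpa using congrArg (QuotientGroup.kerLift φ) h

theorem apply_eq_of_iterate_eq_id [Group.IsNilpotent M] (hM : IsTorsionFree M) (π : G →* M)
    (f : G →* G) {n : ℕ} (hn : n ≠ 0) (hfn : (⇑f)^[n] = id)
    (hab : ∀ g, f g * g⁻¹ ∈ commutator G) (g : G) : π (f g) = π g := by
  let F : Monoid.End G := f
  let φ : G →* (ℕ → M) := MonoidHom.pi fun i => π.comp (F ^ i)
  have : Group.IsNilpotent (ℕ → M) := Group.isNilpotent_pi_of_bounded_class _ fun _ => le_rfl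
  -- `φ (f x) i` is `φ x (i + 1)` by definition
  have hker : φ.ker ≤ φ.ker.comap f := fun x hx => funext fun i => congrFun hx (i + 1)
  exact congrFun ((pi fun _ => hM).apply_eq_of_ker_le_comap φ f hker hn hfn hab g) 0

end Monoid.IsTorsionFree

/-- A nontrivial automorphism of a residually torsion-free nilpotent group that acts
trivially on the abelianization has infinite order. -/
theorem stmt_1 {G : Type*} [Group G]
    (hres : ∀ g : G, g ≠ 1 → ∃ (N : Type) (_ : Group N) (π : G →* N),
      Function.Surjective π ∧ Group.IsNilpotent N ∧ Monoid.IsTorsionFree N ∧ π g ≠ 1)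
    (ψ : MulAut G) (hψ : ψ ≠ 1)
    (hab : ∀ g : G, ψ g * g⁻¹ ∈ commutator G) :
    ¬ IsOfFinOrder ψ := by
  intro hfin
  obtain ⟨n, hn, hψn⟩ := isOfFinOrder_iff_pow_eq_one.mp hfin
  have hiter : (⇑ψ.toMonoidHom)^[n] = id := by
    have h := congrArg (MulAut.toPerm G) hψn
    rw [map_pow, map_one] at h
    exact congrArg DFunLike.coe h
  obtain ⟨g, hg⟩ : ∃ g, ψ g ≠ g := by
    by_contra! h
    exact hψ (MulEquiv.ext h)
  obtain ⟨N, _, π, -, _, hN, hπ⟩ := hres (ψ g * g⁻¹) (mul_inv_eq_one.not.mpr hg)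
  refine hπ ?_
  rw [map_mul, map_inv, mul_inv_eq_one]
  exact hN.apply_eq_of_iterate_eq_id π ψ.toMonoidHom hn.ne' hiter hab g
end

section
/- Let F_n (n ≥ 3) be free on x_1, …, x_n and let ψ be the partial conjugation x_1 ↦ x_1, x_2 ↦ x_1 x_2 x_1^{-1}, x_j ↦ x_j for j ≥ 3. Then there is a finite index normal subgroup H of F_n with F_n/H abelian such that ψ(H) = H and the automorphism induced by ψ on the abelianization H/[H,H] has infinite order. -/
/-!
Index the generators from `0`, so `x₁, x₂, x₃` are `of 0, of 1, of 2`. Take for `H` the kernel of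
`Fₙ → ℤˣ × ℤˣ`, `x₂ ↦ (-1, 1)`, `x₃ ↦ (1, -1)`, all other generators `↦ 1`; it is `ψ`-invariant
because `ψ` changes generators only by conjugation. This map is the quotient part of
`ρ : Fₙ → ℤ ⋊ (ℤˣ × ℤˣ)`, where `(u, v)` acts on `ℤ` by `uv` and `x₁` goes to the generator of `ℤ`,
so `ρ` restricts to a homomorphism `H → ℤ`, which factors through `H^ab`. Now `ψᵏ` sends
`[x₂, x₃] ∈ H` to `[x₁ᵏ x₂ x₁⁻ᵏ, x₃]`, whose image in `ℤ` is `4k`; hence no positive power of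
the induced automorphism fixes the class of `[x₂, x₃]`.
-/

open SemidirectProduct Multiplicative
open scoped commutatorElement

namespace MulAut

variable {G : Type*} [Group G] {ψ : MulAut G}

theorem pow_apply_eq_self {a : G} (ha : ψ a = a) (k : ℕ) : (ψ ^ k) a = a := by
  induction k with
  | zero => rfl
  | succ k ih => rw [pow_succ', mul_apply, ih, ha]

theorem pow_apply_eq_conj {a b : G} (ha : ψ a = a) (hb : ψ b = a * b * a⁻¹) (k : ℕ) :
    (ψ ^ k) b = a ^ k * b * (a ^ k)⁻¹ := by
  induction k with
  | zero => simp
  | succ k ih =>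
    rw [pow_succ', mul_apply, ih, map_mul, map_mul, map_inv, map_pow, ha, hb]
    group

end MulAut

namespace Abelianization

variable {G : Type*} [Group G] {H : Subgroup G} {ψ : MulAut G}
  {φ : Abelianization H ≃* Abelianization H}

theorem pow_apply_of_of_pow_apply_eq (hmem : ∀ x ∈ H, ψ x ∈ H)
    (hφ : ∀ x y : H, ψ (x : G) = y → φ (of x) = of y) (m : ℕ) (x y : H)
    (hxy : (ψ ^ m) (x : G) = y) : (φ ^ m) (of x) = of y := by
  induction m generalizing x with
  | zero => rw [pow_zero, MulAut.one_apply, Subtype.ext hxy]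
  | succ m ih =>
    rw [pow_succ, MulAut.mul_apply, hφ x ⟨ψ x, hmem x x.2⟩ rfl]
    exact ih _ (by rwa [pow_succ, MulAut.mul_apply] at hxy)

theorem exists_pos_of_eq_of_isOfFinOrder (hmem : ∀ x ∈ H, ψ x ∈ H)
    (hφ : ∀ x y : H, ψ (x : G) = y → φ (of x) = of y) (hfin : IsOfFinOrder φ) :
    ∃ k, 0 < k ∧ ∀ x y : H, (ψ ^ k) (x : G) = y → of x = of y := by
  obtain ⟨k, hk, hpow⟩ := isOfFinOrder_iff_pow_eq_one.mp hfin
  refine ⟨k, hk, fun x y hxy => ?_⟩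
  simpa [hpow] using pow_apply_of_of_pow_apply_eq hmem hφ k x y hxy

end Abelianization

namespace SemidirectProduct

variable {N G K : Type*} [Group N] [Group G] [Group K] {φ : G →* MulAut N}

def leftHomOnKer (F : K →* N ⋊[φ] G) : (rightHom.comp F).ker →* N where
  toFun x := (F x).left
  map_one' := by simp
  map_mul' x y := by
    have hx : (F x).right = 1 := x.2
    simp [hx]

@[simp]
theorem leftHomOnKer_apply (F : K →* N ⋊[φ] G) (x : (rightHom.comp F).ker) :
    leftHomOnKer F x = (F x).left :=
  rfl

end SemidirectProduct

namespace FreeGroup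

variable {α : Type*} [DecidableEq α]

def IsPartialConjugation (ψ : MulAut (FreeGroup α)) (a b : α) : Prop :=
  ∀ i, ψ (of i) = if i = b then of a * of b * (of a)⁻¹ else of i

namespace IsPartialConjugation

variable {ψ : MulAut (FreeGroup α)} {a b : α}

theorem apply_of_right (h : IsPartialConjugation ψ a b) :
    ψ (of b) = of a * of b * (of a)⁻¹ := by
  simpa using h b

theorem apply_of_of_ne (h : IsPartialConjugation ψ a b) {i : α} (hi : i ≠ b) :
    ψ (of i) = of i := by
  simpa [hi] using h i

theorem apply_of_left (h : IsPartialConjugation ψ a b) : ψ (of a) = of a := by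
  by_cases hab : a = b
  · subst hab
    rw [h.apply_of_right, mul_inv_cancel_right]
  · exact h.apply_of_of_ne hab

theorem map_apply (h : IsPartialConjugation ψ a b) {A : Type*} [CommGroup A]
    (f : FreeGroup α →* A) (x : FreeGroup α) :
    f (ψ x) = f x := by
  suffices f.comp ψ.toMonoidHom = f from DFunLike.congr_fun this x
  refine FreeGroup.ext_hom _ _ fun i => ?_
  by_cases hi : i = b
  · simp [hi, h.apply_of_right]
  · simp [h.apply_of_of_ne hi]

theorem pow_apply_of_right (h : IsPartialConjugation ψ a b) (k : ℕ) :
    (ψ ^ k) (of b) = of a ^ k * of b * (of a ^ k)⁻¹ :=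
  MulAut.pow_apply_eq_conj h.apply_of_left h.apply_of_right k

theorem pow_apply_of_of_ne (h : IsPartialConjugation ψ a b) {i : α} (hi : i ≠ b) (k : ℕ) :
    (ψ ^ k) (of i) = of i :=
  MulAut.pow_apply_eq_self (h.apply_of_of_ne hi) k

end IsPartialConjugation

end FreeGroup

abbrev signAut : ℤˣ →* MulAut (Multiplicative ℤ) :=
  (MulAutMultiplicative ℤ).symm.toMonoidHom.comp (DistribMulAction.toAddAut ℤˣ ℤ)

abbrev IntSemidirectUnitsSq : Type := Multiplicative ℤ ⋊[signAut.comp mulMonoidHom] (ℤˣ × ℤˣ)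

namespace IntSemidirectUnitsSq

theorem inl_ofAdd_one_pow (k : ℕ) :
    (inl (ofAdd 1) : IntSemidirectUnitsSq) ^ k = inl (ofAdd (k : ℤ)) := by
  rw [← map_pow, ← ofAdd_nsmul, nsmul_one]

theorem commutatorElement_conj_inr_inr (k : ℕ) :
    ⁅(inl (ofAdd 1) : IntSemidirectUnitsSq) ^ k * inr (-1, 1) * ((inl (ofAdd 1) : _) ^ k)⁻¹,
      (inr (1, -1) : IntSemidirectUnitsSq)⁆ = inl (ofAdd (4 * k : ℤ)) := by
  rw [inl_ofAdd_one_pow]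
  ext <;> simp [commutatorElement_def, ← ofAdd_add, ← ofAdd_neg, -Int.ofAdd_mul]
  ring

end IntSemidirectUnitsSq

section

variable {α : Type*} [DecidableEq α]

def toIntSemidirectUnitsSq (a b c : α) : FreeGroup α →* IntSemidirectUnitsSq :=
  FreeGroup.lift fun i =>
    if i = a then inl (ofAdd 1)
    else if i = b then inr (-1, 1)
    else if i = c then inr (1, -1)
    else 1

theorem toIntSemidirectUnitsSq_pow_apply_commutatorElement {a b c : α} (hab : a ≠ b)
    (hac : a ≠ c) (hbc : b ≠ c) {ψ : MulAut (FreeGroup α)}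
    (hψ : FreeGroup.IsPartialConjugation ψ a b) (k : ℕ) :
    toIntSemidirectUnitsSq a b c ((ψ ^ k) ⁅FreeGroup.of b, FreeGroup.of c⁆) =
      inl (ofAdd (4 * k : ℤ)) := by
  rw [map_commutatorElement, hψ.pow_apply_of_right, hψ.pow_apply_of_of_ne hbc.symm,
    map_commutatorElement, map_mul, map_mul, map_inv, map_pow]
  simpa [toIntSemidirectUnitsSq, hab.symm, hac.symm, hbc.symm] using
    IntSemidirectUnitsSq.commutatorElement_conj_inr_inr k

end

open FreeGroup in
open scoped commutatorElement in
/-- For n ≥ 3, the partial conjugation x₁ ↦ x₁, x₂ ↦ x₁x₂x₁⁻¹, x_j ↦ x_j (j ≥ 3) of Fₙ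
preserves a finite-index normal subgroup H with abelian quotient, on whose abelianization
it induces an automorphism of infinite order. -/
theorem stmt_15 (n : ℕ) (hn : 3 ≤ n) (ψ : MulAut (FreeGroup (Fin n)))
    (hψ : ∀ i : Fin n, ψ (of i) =
      if i = (⟨1, by omega⟩ : Fin n) then
        of (⟨0, by omega⟩ : Fin n) * of (⟨1, by omega⟩ : Fin n) * (of (⟨0, by omega⟩ : Fin n))⁻¹
      else of i) :
    ∃ H : Subgroup (FreeGroup (Fin n)), H.Normal ∧ H.FiniteIndex ∧
      (∀ a b : FreeGroup (Fin n), ⁅a, b⁆ ∈ H) ∧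
      (∀ x : FreeGroup (Fin n), x ∈ H ↔ ψ x ∈ H) ∧
      ∀ φ : Abelianization H ≃* Abelianization H,
        (∀ x y : H, ψ (x : FreeGroup (Fin n)) = (y : FreeGroup (Fin n)) →
          φ (Abelianization.of x) = Abelianization.of y) →
        ¬ IsOfFinOrder φ := by
  set a : Fin n := ⟨0, by omega⟩
  set b : Fin n := ⟨1, by omega⟩
  set c : Fin n := ⟨2, by omega⟩
  have hab : a ≠ b := by simp [a, b]
  have hac : a ≠ c := by simp [a, c]
  have hbc : b ≠ c := by simp [b, c]
  have hψ' : IsPartialConjugation ψ a b := hψ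
  have hρ := toIntSemidirectUnitsSq_pow_apply_commutatorElement hab hac hbc hψ'
  set π := rightHom.comp (toIntSemidirectUnitsSq a b c)
  have hπ : ∀ x, π (ψ x) = π x := hψ'.map_apply π
  refine ⟨π.ker, π.normal_ker, inferInstance, fun x y => ?_,
    fun x => by rw [MonoidHom.mem_ker, MonoidHom.mem_ker, hπ], fun φ hφ hfin => ?_⟩
  · rw [MonoidHom.mem_ker, map_commutatorElement, commutatorElement_eq_one_iff_commute]
    exact Commute.all _ _
  obtain ⟨k, hk, hpow⟩ := Abelianization.exists_pos_of_eq_of_isOfFinOrder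
    (fun x hx => by rwa [MonoidHom.mem_ker, hπ]) hφ hfin
  have hker (m : ℕ) : (ψ ^ m) ⁅of b, of c⁆ ∈ π.ker := by
    rw [MonoidHom.mem_ker, MonoidHom.comp_apply, hρ, rightHom_inl]
  have h := congrArg (Abelianization.lift (leftHomOnKer (toIntSemidirectUnitsSq a b c)))
    (hpow ⟨_, hker 0⟩ ⟨_, hker k⟩ (by simp))
  simp only [Abelianization.lift_apply_of, leftHomOnKer_apply, hρ, left_inl,
    EmbeddingLike.apply_eq_iff_eq] at h
  omega
end
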